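/- Let Ω ⊆ ℝⁿ be an open convex set and, for i ∈ I := {1, …, m}, let h_i : ℝⁿ → ℝ be differentiable and convex on Ω. Define h(p) := max_{i ∈ I} h_i(p) and I(p) := {i ∈ I : h_i(p) = h(p)}. Then for every p ∈ Ω, ∂h(p) = convexHull{ ∇h_i(p) : i ∈ I(p) } = { y ∈ ℝⁿ : y = Σ_{i ∈ I(p)} α_i·∇h_i(p) with α_i ≥ 0 and Σ_{i ∈ I(p)} α_i = 1 }. In particular, p minimizes h on Ω if and only if there exist α_i ≥ 0, i ∈ I(p), with Σ_{i ∈ I(p)} α_i = 1 and Σ_{i ∈ I(p)} α_i·∇h_i(p) = 0. -/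

import Mathlib

/-!
Every active gradient is a subgradient of the maximum, and subgradients form a convex set, so the
convex hull of the active gradients consists of subgradients. Conversely, a subgradient `s` outside
that (finite, hence closed) hull is strictly separated from it by some direction `v`: every active
`h i` then grows along `p + t • v` at a rate below `⟪s, v⟫`, the inactive ones stay below the
maximum by continuity, so for small `t > 0` the maximum lies under the supporting line
`H p + t ⟪s, v⟫` that `s` imposes.
-/

open scoped RealInnerProductSpace
open Filter Topology Set

lemma HasDerivAt.eventually_nhdsGT_lt_add_mul {φ : ℝ → ℝ} {d L : ℝ} (hφ : HasDerivAt φ d 0)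
    (hdL : d < L) : ∀ᶠ t in 𝓝[>] 0, φ t < φ 0 + t * L := by
  filter_upwards [hφ.hasDerivWithinAt.limsup_slope_le' self_notMem_Ioi hdL, self_mem_nhdsWithin]
    with t hslope (ht : 0 < t)
  rw [slope_def_field, sub_zero, div_lt_iff₀ ht] at hslope
  linarith

lemma convexHull_setOf_exists_eq {𝕜 E ι : Type*} [Field 𝕜] [LinearOrder 𝕜] [IsStrictOrderedRing 𝕜]
    [AddCommGroup E] [Module 𝕜 E] [Fintype ι] (P : ι → Prop) (g : ι → E) :
    convexHull 𝕜 {x | ∃ i, P i ∧ g i = x} =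
      {y | ∃ α : ι → 𝕜, (∀ i, 0 ≤ α i) ∧ (∀ i, ¬P i → α i = 0) ∧
        ∑ i, α i = 1 ∧ y = ∑ i, α i • g i} := by
  classical
  refine (convexHull_min ?_ ?_).antisymm ?_
  · rintro _ ⟨i, hi, rfl⟩
    refine ⟨Pi.single i 1, fun j => ?_, fun j hj => ?_, by simp, by simp⟩
    · by_cases hji : j = i <;> simp [hji]
    · exact Pi.single_eq_of_ne (fun hji : j = i => hj (hji ▸ hi)) 1
  · rintro _ ⟨α, hα₀, hαP, hα₁, rfl⟩ _ ⟨β, hβ₀, hβP, hβ₁, rfl⟩ a b ha hb hab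
    refine ⟨a • α + b • β, fun i => ?_, fun i hi => ?_, ?_, ?_⟩
    · simp only [Pi.add_apply, Pi.smul_apply, smul_eq_mul]
      exact add_nonneg (mul_nonneg ha (hα₀ i)) (mul_nonneg hb (hβ₀ i))
    · simp [hαP i hi, hβP i hi]
    · simp [Finset.sum_add_distrib, ← Finset.mul_sum, hα₁, hβ₁, hab]
    · simp [Finset.smul_sum, Finset.sum_add_distrib, add_smul, smul_smul]
  · rintro _ ⟨α, hα₀, hαP, hα₁, rfl⟩
    have hsupp : ∀ i ∈ Finset.univ, α i ≠ 0 → P i := fun i _ hi =>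
      by_contra fun hP => hi (hαP i hP)
    rw [← Finset.sum_filter_of_ne fun i hi hne => hsupp i hi (left_ne_zero_of_smul hne)]
    refine (convex_convexHull 𝕜 _).sum_mem (fun i _ => hα₀ i) ?_ fun i hi => ?_
    · rwa [Finset.sum_filter_of_ne hsupp]
    · exact subset_convexHull 𝕜 _ ⟨i, (Finset.mem_filter.1 hi).2, rfl⟩

section Subgradients

variable {E : Type*} [NormedAddCommGroup E] [InnerProductSpace ℝ E]

def subgradients (Ω : Set E) (f : E → ℝ) (p : E) : Set E :=
  {s | ∀ q ∈ Ω, f p + ⟪s, q - p⟫ ≤ f q}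

lemma convex_subgradients (Ω : Set E) (f : E → ℝ) (p : E) : Convex ℝ (subgradients Ω f p) := by
  intro s hs t ht a b ha hb hab q hq
  rw [inner_add_left, real_inner_smul_left, real_inner_smul_left]
  linear_combination a * hs q hq + b * ht q hq + (f q - f p) * hab

lemma mem_subgradients_of_le_of_eq {Ω : Set E} {f F : E → ℝ} {p s : E} (hle : ∀ q, f q ≤ F q)
    (heq : f p = F p) (hs : s ∈ subgradients Ω f p) : s ∈ subgradients Ω F p :=
  fun q hq => heq ▸ (hs q hq).trans (hle q)

lemma zero_mem_subgradients_iff {Ω : Set E} {f : E → ℝ} {p : E} :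
    0 ∈ subgradients Ω f p ↔ ∀ q ∈ Ω, f p ≤ f q := by
  simp [subgradients]

variable [CompleteSpace E]

lemma exists_inner_lt_of_notMem {C : Set E} {s : E} (hCc : Convex ℝ C) (hCo : IsClosed C)
    (hs : s ∉ C) : ∃ v : E, ∀ a ∈ C, ⟪a, v⟫ < ⟪s, v⟫ := by
  obtain ⟨f, u, hfC, hfs⟩ := geometric_hahn_banach_closed_point hCc hCo hs
  refine ⟨(InnerProductSpace.toDual ℝ E).symm f, fun a ha => ?_⟩
  rw [real_inner_comm _ a, real_inner_comm _ s, InnerProductSpace.toDual_symm_apply,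
    InnerProductSpace.toDual_symm_apply]
  exact (hfC a ha).trans hfs

lemma hasDerivAt_comp_lineMap_of_hasGradientAt {f : E → ℝ} {G p : E} (hf : HasGradientAt f G p)
    (q : E) : HasDerivAt (f ∘ AffineMap.lineMap (k := ℝ) p q) ⟪G, q - p⟫ 0 := by
  have hf' : HasFDerivAt f (InnerProductSpace.toDual ℝ E G) (AffineMap.lineMap p q (0 : ℝ)) := by
    simpa using hf.hasFDerivAt
  simpa using hf'.comp_hasDerivAt (0 : ℝ) AffineMap.hasDerivAt_lineMap

lemma ConvexOn.mem_subgradients_of_hasGradientAt {Ω : Set E} {f : E → ℝ} {G p : E}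
    (hf : ConvexOn ℝ Ω f) (hG : HasGradientAt f G p) (hp : p ∈ Ω) :
    G ∈ subgradients Ω f p := by
  intro q hq
  have hslope := (hf.comp_affineMap (AffineMap.lineMap p q)).le_slope_of_hasDerivAt
    (x := 0) (y := 1) (by simpa) (by simpa) one_pos (hasDerivAt_comp_lineMap_of_hasGradientAt hG q)
  simp only [slope_def_field, Function.comp_apply, AffineMap.lineMap_apply_zero,
    AffineMap.lineMap_apply_one, sub_zero, div_one] at hslope
  linarith

variable {ι : Type*} [Fintype ι] [Nonempty ι] {h : ι → E → ℝ} {H : E → ℝ} {g : ι → E} {p : E}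

lemma eventually_lineMap_lt_of_hasGradientAt
    (hH : ∀ q, H q = Finset.univ.sup' Finset.univ_nonempty fun i => h i q)
    (hG : ∀ i, HasGradientAt (h i) (g i) p) {q : E} {L : ℝ}
    (hL : ∀ i, h i p = H p → ⟪g i, q - p⟫ < L) :
    ∀ᶠ t in 𝓝[>] (0 : ℝ), H (AffineMap.lineMap p q t) < H p + t * L := by
  have hlt : ∀ i, ∀ᶠ t in 𝓝[>] (0 : ℝ), h i (AffineMap.lineMap p q t) < H p + t * L := by
    intro i
    have hφ := hasDerivAt_comp_lineMap_of_hasGradientAt (hG i) q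
    have hle : h i p ≤ H p := hH p ▸ Finset.le_sup' (fun i => h i p) (Finset.mem_univ i)
    rcases hle.eq_or_lt with hact | hinact
    · simpa [hact] using hφ.eventually_nhdsGT_lt_add_mul (hL i hact)
    · exact (hφ.continuousAt.eventually_lt (by fun_prop) (by simpa using hinact)).filter_mono
        nhdsWithin_le_nhds
  filter_upwards [eventually_all.2 hlt] with t ht
  rw [hH]
  exact (Finset.sup'_lt_iff _).2 fun i _ => ht i

lemma subgradients_subset_convexHull_of_eq_sup'
    (hH : ∀ q, H q = Finset.univ.sup' Finset.univ_nonempty fun i => h i q)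
    {Ω : Set E} (hΩ : Ω ∈ 𝓝 p) (hG : ∀ i, HasGradientAt (h i) (g i) p) :
    subgradients Ω H p ⊆ convexHull ℝ {x | ∃ i, h i p = H p ∧ g i = x} := by
  intro s hs
  by_contra hsA
  have hfin : {x | ∃ i, h i p = H p ∧ g i = x}.Finite :=
    (finite_range g).subset (by rintro _ ⟨i, -, rfl⟩; exact mem_range_self i)
  obtain ⟨v, hv⟩ := exists_inner_lt_of_notMem (convex_convexHull ℝ _) (hfin.isClosed_convexHull (𝕜 := ℝ)) hsA
  have hmem : ∀ᶠ t in 𝓝[>] (0 : ℝ), AffineMap.lineMap p (p + v) t ∈ Ω :=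
    (AffineMap.lineMap_continuous.tendsto' 0 p (by simp)).mono_left nhdsWithin_le_nhds hΩ
  have hbelow := eventually_lineMap_lt_of_hasGradientAt hH hG (q := p + v) (L := ⟪s, v⟫)
    fun i hi => by simpa using hv (g i) (subset_convexHull ℝ _ ⟨i, hi, rfl⟩)
  obtain ⟨t, htΩ, htH⟩ := (hmem.and hbelow).exists
  have hsupport := hs _ htΩ
  rw [← vsub_eq_sub, AffineMap.lineMap_vsub_left, vsub_eq_sub, add_sub_cancel_left,
    real_inner_smul_right] at hsupport
  linarith

lemma subgradients_eq_convexHull_of_eq_sup'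
    (hH : ∀ q, H q = Finset.univ.sup' Finset.univ_nonempty fun i => h i q)
    {Ω : Set E} (hΩ : Ω ∈ 𝓝 p) (hp : p ∈ Ω) (hconv : ∀ i, ConvexOn ℝ Ω (h i))
    (hG : ∀ i, HasGradientAt (h i) (g i) p) :
    subgradients Ω H p = convexHull ℝ {x | ∃ i, h i p = H p ∧ g i = x} := by
  refine (subgradients_subset_convexHull_of_eq_sup' hH hΩ hG).antisymm
    (convexHull_min ?_ (convex_subgradients Ω H p))
  rintro _ ⟨i, hi, rfl⟩
  exact mem_subgradients_of_le_of_eq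
    (fun q => hH q ▸ Finset.le_sup' (fun i => h i q) (Finset.mem_univ i)) hi
    ((hconv i).mem_subgradients_of_hasGradientAt (hG i) hp)

end Subgradients

theorem stmt_3 {n : ℕ} {ι : Type*} [Fintype ι] [Nonempty ι]
    (Ω : Set (EuclideanSpace ℝ (Fin n))) (hΩo : IsOpen Ω)
    (h : ι → EuclideanSpace ℝ (Fin n) → ℝ)
    (g : ι → EuclideanSpace ℝ (Fin n) → EuclideanSpace ℝ (Fin n))
    (hdiff : ∀ i, ∀ p ∈ Ω, HasGradientAt (h i) (g i p) p)
    (hconv : ∀ i, ConvexOn ℝ Ω (h i))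
    (H : EuclideanSpace ℝ (Fin n) → ℝ)
    (hH : ∀ p, H p = Finset.univ.sup' Finset.univ_nonempty fun i => h i p) :
    ∀ p ∈ Ω,
      ({s : EuclideanSpace ℝ (Fin n) | ∀ q ∈ Ω, H p + ⟪s, q - p⟫ ≤ H q} =
        convexHull ℝ {x | ∃ i, h i p = H p ∧ g i p = x}) ∧
      ({s : EuclideanSpace ℝ (Fin n) | ∀ q ∈ Ω, H p + ⟪s, q - p⟫ ≤ H q} =
        {y | ∃ α : ι → ℝ, (∀ i, 0 ≤ α i) ∧ (∀ i, h i p ≠ H p → α i = 0) ∧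
          ∑ i, α i = 1 ∧ y = ∑ i, α i • g i p}) ∧
      ((∀ q ∈ Ω, H p ≤ H q) ↔
        ∃ α : ι → ℝ, (∀ i, 0 ≤ α i) ∧ (∀ i, h i p ≠ H p → α i = 0) ∧
          ∑ i, α i = 1 ∧ ∑ i, α i • g i p = 0) := by
  intro p hp
  have hhull : subgradients Ω H p = convexHull ℝ {x | ∃ i, h i p = H p ∧ g i p = x} :=
    subgradients_eq_convexHull_of_eq_sup' hH (hΩo.mem_nhds hp) hp hconv fun i => hdiff i p hp
  have hweights := hhull.trans (convexHull_setOf_exists_eq _ _)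
  refine ⟨hhull, hweights, ?_⟩
  rw [← zero_mem_subgradients_iff, hweights]
  simp only [mem_ofPred_eq, eq_comm]
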